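/- arXiv:1602.00969 — 2 statements merged into one kernel-verified Lean document; each statement's English description precedes it below -/
import Mathlib

section
/- For every integer n ≥ 3, there exists a non-transitive set of n-sided dice: a partition of [3n] into n-element sets A, B, C with W(A,B) > n²/2, W(B,C) > n²/2, and W(C,A) > n²/2. -/
/-- Number of winning pairs: pairs (x,y) with x from X, y from Y, and x > y. -/
def W (X Y : Finset ℕ) : ℕ := ((X ×ˢ Y).filter (fun p => p.2 < p.1)).card

/-- A set of n-sided dice: a partition of [3n] into three n-element sets. -/
def IsDice (n : ℕ) (A B C : Finset ℕ) : Prop :=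
  A ∪ B ∪ C = Finset.Icc 1 (3 * n) ∧
  A.card = n ∧ B.card = n ∧ C.card = n ∧
  Disjoint A B ∧ Disjoint A C ∧ Disjoint B C

open Finset

lemma prodDisjL {X X' Y Y' : Finset ℕ} (h : Disjoint X X') :
    Disjoint (X ×ˢ Y) (X' ×ˢ Y') := by
  rw [Finset.disjoint_left] at *
  rintro ⟨a, b⟩ hp hp'
  rw [Finset.mem_product] at hp hp'
  exact h hp.1 hp'.1

lemma prodDisjR {X X' Y Y' : Finset ℕ} (h : Disjoint Y Y') :
    Disjoint (X ×ˢ Y) (X' ×ˢ Y') := by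
  rw [Finset.disjoint_left] at *
  rintro ⟨a, b⟩ hp hp'
  rw [Finset.mem_product] at hp hp'
  exact h hp.2 hp'.2

lemma W_union {X X' Y Y' : Finset ℕ} (hX : Disjoint X X') (hY : Disjoint Y Y') :
    W (X ∪ X') (Y ∪ Y') = W X Y + W X Y' + W X' Y + W X' Y' := by
  unfold W
  rw [Finset.union_product, Finset.filter_union,
    Finset.card_union_of_disjoint (Finset.disjoint_filter_filter (prodDisjL hX)),
    Finset.product_union, Finset.product_union, Finset.filter_union, Finset.filter_union,
    Finset.card_union_of_disjoint (Finset.disjoint_filter_filter (prodDisjR hY)),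
    Finset.card_union_of_disjoint (Finset.disjoint_filter_filter (prodDisjR hY))]
  ring

lemma W_all {X Y : Finset ℕ} (h : ∀ x ∈ X, ∀ y ∈ Y, y < x) :
    W X Y = X.card * Y.card := by
  unfold W
  rw [Finset.filter_true_of_mem, Finset.card_product]
  rintro ⟨a, b⟩ hp
  rw [Finset.mem_product] at hp
  exact h a hp.1 b hp.2

lemma W_none {X Y : Finset ℕ} (h : ∀ x ∈ X, ∀ y ∈ Y, ¬ y < x) :
    W X Y = 0 := by
  unfold W
  rw [Finset.filter_false_of_mem, Finset.card_empty]
  rintro ⟨a, b⟩ hp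
  rw [Finset.mem_product] at hp
  exact h a hp.1 b hp.2

lemma W_shift (k : ℕ) (X Y : Finset ℕ) :
    W (X.image (k + ·)) (Y.image (k + ·)) = W X Y := by
  unfold W
  symm
  apply Finset.card_bij (fun p _ => (k + p.1, k + p.2))
  · rintro ⟨a, b⟩ hp
    simp only [Finset.mem_filter, Finset.mem_product, Finset.mem_image] at *
    exact ⟨⟨⟨a, hp.1.1, rfl⟩, ⟨b, hp.1.2, rfl⟩⟩, by omega⟩
  · rintro ⟨a, b⟩ hp ⟨c, d⟩ hq h
    simp only [Prod.mk.injEq] at h ⊢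
    omega
  · rintro ⟨a, b⟩ hp
    simp only [Finset.mem_filter, Finset.mem_product, Finset.mem_image] at hp
    obtain ⟨⟨⟨x, hx, hxe⟩, ⟨y, hy, hye⟩⟩, hlt⟩ := hp
    refine ⟨(x, y), ?_, ?_⟩
    · simp only [Finset.mem_filter, Finset.mem_product]
      exact ⟨⟨hx, hy⟩, by omega⟩
    · simp only [Prod.mk.injEq]; omega

def DA : Finset ℕ := {1,5,9}
def DB : Finset ℕ := {3,4,8}
def DC : Finset ℕ := {2,6,7}

def P (n : ℕ) : Prop := ∃ A B C : Finset ℕ, IsDice n A B C ∧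
  2 * W A B > n ^ 2 ∧ 2 * W B C > n ^ 2 ∧ 2 * W C A > n ^ 2

lemma base3 : P 3 :=
  ⟨{1,5,9}, {3,4,8}, {2,6,7},
    ⟨by decide, by decide, by decide, by decide, by decide, by decide, by decide⟩,
    by decide, by decide, by decide⟩

lemma base4 : P 4 :=
  ⟨{1,3,10,11}, {2,7,8,9}, {4,5,6,12},
    ⟨by decide, by decide, by decide, by decide, by decide, by decide, by decide⟩,
    by decide, by decide, by decide⟩

lemma base5 : P 5 :=
  ⟨{1,2,7,14,15}, {4,5,6,12,13}, {3,8,9,10,11},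
    ⟨by decide, by decide, by decide, by decide, by decide, by decide, by decide⟩,
    by decide, by decide, by decide⟩

lemma step (n : ℕ) (h : P n) : P (n + 3) := by
  obtain ⟨A, B, C, ⟨hU, hcA, hcB, hcC, hAB, hAC, hBC⟩, w1, w2, w3⟩ := h
  set k := 3 * n with hk
  have hbnd : ∀ x ∈ A ∪ B ∪ C, x ≤ k := by
    intro x hx
    rw [hU, Finset.mem_Icc] at hx
    exact hx.2
  have hbA : ∀ x ∈ A, x ≤ k := fun x hx => hbnd x (by simp [hx])
  have hbB : ∀ x ∈ B, x ≤ k := fun x hx => hbnd x (by simp [hx])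
  have hbC : ∀ x ∈ C, x ≤ k := fun x hx => hbnd x (by simp [hx])
  have hnew : ∀ (S : Finset ℕ), (∀ a ∈ S, 1 ≤ a) →
      ∀ x ∈ S.image (k + ·), k + 1 ≤ x := by
    intro S hS x hx
    simp only [Finset.mem_image] at hx
    obtain ⟨a, ha, rfl⟩ := hx
    have := hS a ha
    omega
  have hnA : ∀ x ∈ DA.image (k + ·), k + 1 ≤ x := hnew DA (by decide)
  have hnB : ∀ x ∈ DB.image (k + ·), k + 1 ≤ x := hnew DB (by decide)
  have hnC : ∀ x ∈ DC.image (k + ·), k + 1 ≤ x := hnew DC (by decide)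
  have hdon : ∀ (S T : Finset ℕ), (∀ x ∈ S, x ≤ k) → (∀ x ∈ T, k + 1 ≤ x) →
      Disjoint S T := by
    intro S T hS hT
    rw [Finset.disjoint_left]
    intro x hx hx'
    have := hS x hx
    have := hT x hx'
    omega
  have hinj : Function.Injective (k + ·) := fun a b hab => by
    simp only [] at hab; omega
  have cimg : ∀ S : Finset ℕ, (S.image (k + ·)).card = S.card :=
    fun S => Finset.card_image_of_injective _ hinj
  refine ⟨A ∪ DA.image (k + ·), B ∪ DB.image (k + ·), C ∪ DC.image (k + ·),
    ⟨?_, ?_, ?_, ?_, ?_, ?_, ?_⟩, ?_, ?_, ?_⟩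
  · have himg : (DA ∪ DB ∪ DC).image (k + ·) = Finset.Icc (k + 1) (k + 9) := by
      have h9 : (DA ∪ DB ∪ DC : Finset ℕ) = Finset.Icc 1 9 := by decide
      rw [h9]
      ext x
      simp only [Finset.mem_image, Finset.mem_Icc]
      constructor
      · rintro ⟨a, ha, rfl⟩; omega
      · intro hx; exact ⟨x - k, by omega, by omega⟩
    have hre : A ∪ DA.image (k + ·) ∪ (B ∪ DB.image (k + ·)) ∪ (C ∪ DC.image (k + ·))
        = (A ∪ B ∪ C) ∪ (DA ∪ DB ∪ DC).image (k + ·) := by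
      rw [Finset.image_union, Finset.image_union]
      ext x
      simp only [Finset.mem_union]
      tauto
    rw [hre, hU, himg]
    ext x
    simp only [Finset.mem_union, Finset.mem_Icc]
    omega
  · rw [Finset.card_union_of_disjoint (hdon _ _ hbA hnA), cimg, hcA]; rfl
  · rw [Finset.card_union_of_disjoint (hdon _ _ hbB hnB), cimg, hcB]; rfl
  · rw [Finset.card_union_of_disjoint (hdon _ _ hbC hnC), cimg, hcC]; rfl
  · rw [Finset.disjoint_union_left, Finset.disjoint_union_right,
      Finset.disjoint_union_right]
    exact ⟨⟨hAB, hdon _ _ hbA hnB⟩,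
      ⟨(hdon _ _ hbB hnA).symm, (Finset.disjoint_image hinj).2 (by decide)⟩⟩
  · rw [Finset.disjoint_union_left, Finset.disjoint_union_right,
      Finset.disjoint_union_right]
    exact ⟨⟨hAC, hdon _ _ hbA hnC⟩,
      ⟨(hdon _ _ hbC hnA).symm, (Finset.disjoint_image hinj).2 (by decide)⟩⟩
  · rw [Finset.disjoint_union_left, Finset.disjoint_union_right,
      Finset.disjoint_union_right]
    exact ⟨⟨hBC, hdon _ _ hbB hnC⟩,
      ⟨(hdon _ _ hbC hnB).symm, (Finset.disjoint_image hinj).2 (by decide)⟩⟩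
  · have e1 : W A (DB.image (k + ·)) = 0 :=
      W_none (fun x hx y hy => by have := hbA x hx; have := hnB y hy; omega)
    have e2 : W (DA.image (k + ·)) B = 3 * n := by
      rw [W_all (fun x hx y hy => by have := hnA x hx; have := hbB y hy; omega),
        cimg, hcB]
      norm_num [DA]
    have e3 : W (DA.image (k + ·)) (DB.image (k + ·)) = 5 := by
      rw [W_shift]; decide
    rw [W_union (hdon _ _ hbA hnA) (hdon _ _ hbB hnB), e1, e2, e3]
    nlinarith [w1]
  · have e1 : W B (DC.image (k + ·)) = 0 :=
      W_none (fun x hx y hy => by have := hbB x hx; have := hnC y hy; omega)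
    have e2 : W (DB.image (k + ·)) C = 3 * n := by
      rw [W_all (fun x hx y hy => by have := hnB x hx; have := hbC y hy; omega),
        cimg, hcC]
      norm_num [DB]
    have e3 : W (DB.image (k + ·)) (DC.image (k + ·)) = 5 := by
      rw [W_shift]; decide
    rw [W_union (hdon _ _ hbB hnB) (hdon _ _ hbC hnC), e1, e2, e3]
    nlinarith [w2]
  · have e1 : W C (DA.image (k + ·)) = 0 :=
      W_none (fun x hx y hy => by have := hbC x hx; have := hnA y hy; omega)
    have e2 : W (DC.image (k + ·)) A = 3 * n := by
      rw [W_all (fun x hx y hy => by have := hnC x hx; have := hbA y hy; omega),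
        cimg, hcA]
      norm_num [DC]
    have e3 : W (DC.image (k + ·)) (DA.image (k + ·)) = 5 := by
      rw [W_shift]; decide
    rw [W_union (hdon _ _ hbC hnC) (hdon _ _ hbA hnA), e1, e2, e3]
    nlinarith [w3]

lemma allP : ∀ m, P (m + 3) ∧ P (m + 4) ∧ P (m + 5) := by
  intro m
  induction m with
  | zero => exact ⟨base3, base4, base5⟩
  | succ m ih => exact ⟨ih.2.1, ih.2.2, step (m + 3) ih.1⟩

theorem stmt7 (n : ℕ) (hn : 3 ≤ n) :
    ∃ A B C : Finset ℕ, IsDice n A B C ∧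
      2 * W A B > n ^ 2 ∧ 2 * W B C > n ^ 2 ∧ 2 * W C A > n ^ 2 := by
  obtain ⟨m, rfl⟩ : ∃ m, n = m + 3 := ⟨n - 3, by omega⟩
  exact (allP m).1
end

section
/- A set of n-sided dice (A,B,C) (a partition of [3n] into three n-element sets) is balanced, i.e., W(A,B) = W(B,C) = W(C,A), if and only if the face-sums are all equal: Σ_{i∈A} i = Σ_{i∈B} i = Σ_{i∈C} i. -/
open Finset

lemma W_eq_sum_ite (X Y : Finset ℕ) :
    W X Y = ∑ x ∈ X, ∑ y ∈ Y, if y < x then 1 else 0 := by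
  rw [W, card_filter, sum_product]

lemma W_eq_sum_card_filter (X Y : Finset ℕ) : W X Y = ∑ x ∈ X, #{y ∈ Y | y < x} := by
  simp only [W_eq_sum_ite, card_filter]

lemma W_add_W_add_card_inter (X Y : Finset ℕ) :
    W X Y + W Y X + #(X ∩ Y) = #X * #Y := by
  have hinter : #(X ∩ Y) = ∑ x ∈ X, ∑ y ∈ Y, if x = y then 1 else 0 := by
    simp only [sum_ite_eq, ← card_filter, filter_mem_eq_inter]
  rw [W_eq_sum_ite, W_eq_sum_ite Y X, sum_comm (s := Y), hinter, card_eq_sum_ones X,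
    sum_mul, ← sum_add_distrib, ← sum_add_distrib]
  refine sum_congr rfl fun x _ => ?_
  rw [one_mul, card_eq_sum_ones, ← sum_add_distrib, ← sum_add_distrib]
  refine sum_congr rfl fun y _ => ?_
  split_ifs <;> omega

lemma W_add_W_of_disjoint {X Y : Finset ℕ} (h : Disjoint X Y) : W X Y + W Y X = #X * #Y := by
  simpa [disjoint_iff_inter_eq_empty.mp h] using W_add_W_add_card_inter X Y

lemma two_mul_W_self_add_card (X : Finset ℕ) : 2 * W X X + #X = #X * #X := by
  simpa [two_mul] using W_add_W_add_card_inter X X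

lemma W_union_right (X : Finset ℕ) {Y Z : Finset ℕ} (h : Disjoint Y Z) :
    W X (Y ∪ Z) = W X Y + W X Z := by
  simp only [W_eq_sum_card_filter, filter_union, card_union_of_disjoint (disjoint_filter_filter h),
    sum_add_distrib]

lemma W_Icc_add_card {X : Finset ℕ} {m : ℕ} (hX : X ⊆ Icc 1 m) :
    W X (Icc 1 m) + #X = ∑ x ∈ X, x := by
  rw [W_eq_sum_card_filter, card_eq_sum_ones, ← sum_add_distrib]
  refine sum_congr rfl fun x hx => ?_
  have hx := mem_Icc.mp (hX hx)
  have : {y ∈ Icc 1 m | y < x} = Ico 1 x := by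
    ext y; simp only [mem_filter, mem_Icc, mem_Ico]; omega
  rw [this, Nat.card_Ico]
  omega

lemma IsDice.sum_eq {n : ℕ} {A B C : Finset ℕ} (h : IsDice n A B C) {X : Finset ℕ}
    (hX : X ⊆ Icc 1 (3 * n)) : ∑ x ∈ X, x = #X + W X A + W X B + W X C := by
  obtain ⟨hU, -, -, -, hAB, hAC, hBC⟩ := h
  rw [← W_Icc_add_card hX, ← hU, W_union_right X (disjoint_union_left.mpr ⟨hAC, hBC⟩),
    W_union_right X hAB]
  ring

theorem stmt9 (n : ℕ) (A B C : Finset ℕ) (h : IsDice n A B C) :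
    (W A B = W B C ∧ W B C = W C A) ↔
    ((∑ i ∈ A, i) = (∑ i ∈ B, i) ∧ (∑ i ∈ B, i) = (∑ i ∈ C, i)) := by
  have sumA := h.sum_eq (h.1 ▸ subset_union_left.trans subset_union_left)
  have sumB := h.sum_eq (h.1 ▸ subset_union_right.trans subset_union_left)
  have sumC := h.sum_eq (h.1 ▸ subset_union_right)
  obtain ⟨-, hA, hB, hC, hAB, hAC, hBC⟩ := h
  have pairAB := W_add_W_of_disjoint hAB
  have pairBC := W_add_W_of_disjoint hBC
  have pairCA := W_add_W_of_disjoint hAC.symm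
  have selfA := two_mul_W_self_add_card A
  have selfB := two_mul_W_self_add_card B
  have selfC := two_mul_W_self_add_card C
  simp only [hA, hB, hC] at sumA sumB sumC pairAB pairBC pairCA selfA selfB selfC
  constructor <;> rintro ⟨h₁, h₂⟩ <;> constructor <;> omega
end
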